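/- arXiv:1608.02198 — 6 statements merged into one kernel-verified Lean document; each statement's English description precedes it below -/
import Mathlib

section
/- Let X be a finite type, D₀ a probability distribution on X, D a finite nonempty family of probability distributions on X, and τ > 0. Suppose there is a probability measure Q over functions φ : X → [-1,1] (with finite support) such that for every D ∈ D, Pr_{φ∼Q}[|E_D[φ] - E_{D₀}[φ]| > τ] ≥ 1/d. Then for every probability measure μ on D and every δ > 0, there exists a subset D_δ ⊆ D with μ(D_δ) ≥ 1 - δ and a finite collection of at most ⌈d·ln(1/δ)⌉ functions φ₁,…,φ_s : X → [-1,1] such that for every D ∈ D_δ there exists i with |E_D[φᵢ] - E_{D₀}[φᵢ]| > τ. -/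
open Finset

def IsDist {X : Type*} [Fintype X] (D : X → ℝ) : Prop :=
  (∀ x, 0 ≤ D x) ∧ ∑ x, D x = 1

def expec {X : Type*} [Fintype X] (D φ : X → ℝ) : ℝ := ∑ x, D x * φ x

open scoped Classical in
/-- A randomized `τ`-cover of size `d` yields a deterministic `τ`-cover of
size at most `⌈d ln(1/δ)⌉` of all but a `δ`-fraction (under `μ`) of the
distributions. -/
theorem stmt4 {X J I : Type*} [Fintype X] [Fintype J] [Nonempty J] [Fintype I]
    (D0 : X → ℝ) (hD0 : IsDist D0)
    (Ds : J → X → ℝ) (hDs : ∀ j, IsDist (Ds j))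
    (τ : ℝ) (hτ : 0 < τ)
    (q : I → ℝ) (hq : IsDist q)
    (Φ : I → X → ℝ) (hΦ : ∀ i x, Φ i x ∈ Set.Icc (-1:ℝ) 1)
    (d : ℝ) (hd : 0 < d)
    (hcov : ∀ j, (1:ℝ) / d ≤
      ∑ i ∈ univ.filter (fun i => τ < |expec (Ds j) (Φ i) - expec D0 (Φ i)|), q i)
    (μ : J → ℝ) (hμ : IsDist μ) (δ : ℝ) (hδ : 0 < δ) :
    ∃ (Dδ : Finset J) (s : ℕ) (φs : Fin s → X → ℝ),
      1 - δ ≤ ∑ j ∈ Dδ, μ j ∧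
      s ≤ ⌈d * Real.log (1 / δ)⌉₊ ∧
      (∀ k x, φs k x ∈ Set.Icc (-1:ℝ) 1) ∧
      ∀ j ∈ Dδ, ∃ k, τ < |expec (Ds j) (φs k) - expec D0 (φs k)| := by
  classical
  obtain ⟨hq0, hq1⟩ := hq
  obtain ⟨hμ0, hμ1⟩ := hμ
  by_cases hδ1 : 1 ≤ δ
  · exact ⟨∅, 0, Fin.elim0, by simp; linarith, by simp, fun k => k.elim0, by simp⟩
  push_neg at hδ1
  set C : J → Finset I := fun j => univ.filter (fun i => τ < |expec (Ds j) (Φ i) - expec D0 (Φ i)|) with hC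
  set p : J → ℝ := fun j => ∑ i ∈ C j, q i with hp
  have hp1 : ∀ j, p j ≤ 1 := by
    intro j
    rw [← hq1]
    exact Finset.sum_le_sum_of_subset_of_nonneg (Finset.subset_univ _) (fun i _ _ => hq0 i)
  have hpd : ∀ j, 1 / d ≤ p j := hcov
  have hd1 : 1 ≤ d := by
    obtain ⟨j0⟩ := ‹Nonempty J›
    have h1 : 1 / d ≤ 1 := le_trans (hpd j0) (hp1 j0)
    rw [div_le_one hd] at h1; exact h1
  set s := ⌈d * Real.log (1 / δ)⌉₊ with hs
  have hkey : ∀ j, (1 - p j) ^ s ≤ δ := by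
    intro j
    have h1 : (1 - p j) ^ s ≤ (1 - 1 / d) ^ s := by
      apply pow_le_pow_left₀ (by linarith [hp1 j]) (by linarith [hpd j])
    have h2 : (1 - 1 / d) ^ s ≤ Real.exp (-(1 / d)) ^ s := by
      apply pow_le_pow_left₀ (by linarith [hp1 j, hpd j])
      linarith [Real.add_one_le_exp (-(1 / d))]
    have h3 : Real.exp (-(1 / d)) ^ s = Real.exp (-(s / d)) := by
      rw [← Real.exp_nat_mul]; ring_nf
    have h4 : Real.exp (-(s / d)) ≤ δ := by
      rw [← Real.exp_log hδ]
      apply Real.exp_le_exp.mpr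
      have hle : d * Real.log (1 / δ) ≤ (s : ℝ) := Nat.le_ceil _
      have hlog : Real.log (1 / δ) = -Real.log δ := by
        rw [one_div, Real.log_inv]
      rw [hlog] at hle
      have h5 : -Real.log δ ≤ (s : ℝ) / d := (le_div_iff₀ hd).mpr (by linarith)
      linarith
    calc (1 - p j) ^ s ≤ (1 - 1/d) ^ s := h1
      _ ≤ Real.exp (-(1/d)) ^ s := h2
      _ = Real.exp (-(s/d)) := h3
      _ ≤ δ := h4
  set w : (Fin s → I) → ℝ := fun f => ∏ k, q (f k) with hw
  have hw0 : ∀ f, 0 ≤ w f := fun f => Finset.prod_nonneg (fun k _ => hq0 _)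
  have hw1 : ∑ f : Fin s → I, w f = 1 := by
    rw [← Fintype.piFinset_univ, ← Finset.prod_univ_sum]
    simp [hq1]
  set U : (Fin s → I) → ℝ := fun f => ∑ j ∈ univ.filter (fun j => ∀ k, f k ∉ C j), μ j with hU
  have hinner : ∀ j, ∑ f ∈ univ.filter (fun f : Fin s → I => ∀ k, f k ∉ C j), w f
      = (1 - p j) ^ s := by
    intro j
    have he : univ.filter (fun f : Fin s → I => ∀ k, f k ∉ C j)
        = Fintype.piFinset (fun _ : Fin s => (C j)ᶜ) := by
      ext f; simp [Fintype.mem_piFinset]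
    rw [he, ← Finset.prod_univ_sum]
    have : ∑ i ∈ (C j)ᶜ, q i = 1 - p j := by
      have := Finset.sum_add_sum_compl (C j) q
      rw [hq1] at this
      linarith
    simp [this]
  have hswap : ∑ f : Fin s → I, w f * U f = ∑ j, μ j * (1 - p j) ^ s := by
    have : ∀ f : Fin s → I, w f * U f
        = ∑ j, (if ∀ k, f k ∉ C j then w f * μ j else 0) := by
      intro f
      rw [hU]
      rw [Finset.mul_sum, Finset.sum_filter]
    rw [Finset.sum_congr rfl (fun f _ => this f), Finset.sum_comm]
    apply Finset.sum_congr rfl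
    intro j _
    rw [← hinner j, Finset.sum_filter, Finset.mul_sum]
    apply Finset.sum_congr rfl
    intro f _
    split <;> ring
  have havg : ∑ f : Fin s → I, w f * U f ≤ δ := by
    rw [hswap]
    calc ∑ j, μ j * (1 - p j) ^ s ≤ ∑ j, μ j * δ := by
          apply Finset.sum_le_sum
          intro j _
          exact mul_le_mul_of_nonneg_left (hkey j) (hμ0 j)
      _ = δ := by rw [← Finset.sum_mul, hμ1, one_mul]
  have hex : ∃ f : Fin s → I, U f ≤ δ := by
    by_contra h
    push_neg at h
    have hlt : δ < ∑ f : Fin s → I, w f * U f := by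
      have : ∑ f : Fin s → I, w f * δ < ∑ f : Fin s → I, w f * U f := by
        apply Finset.sum_lt_sum
        · intro f _
          exact mul_le_mul_of_nonneg_left (le_of_lt (h f)) (hw0 f)
        · have : ∃ f : Fin s → I, 0 < w f := by
            by_contra h2
            push_neg at h2
            have : ∑ f : Fin s → I, w f ≤ 0 :=
              Finset.sum_nonpos (fun f _ => h2 f)
            rw [hw1] at this; linarith
          obtain ⟨f0, hf0⟩ := this
          exact ⟨f0, Finset.mem_univ _, by nlinarith [h f0]⟩
      rw [← Finset.sum_mul, hw1, one_mul] at this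
      linarith
    linarith
  obtain ⟨f, hf⟩ := hex
  refine ⟨univ.filter (fun j => ∃ k, f k ∈ C j), s, fun k => Φ (f k), ?_, le_refl _,
    fun k x => hΦ _ x, ?_⟩
  · have hcompl := Finset.sum_filter_add_sum_filter_not univ (fun j => ∃ k, f k ∈ C j) μ
    rw [hμ1] at hcompl
    have heq : univ.filter (fun j => ¬ ∃ k, f k ∈ C j)
        = univ.filter (fun j => ∀ k, f k ∉ C j) := by
      ext j; simp
    rw [heq] at hcompl
    have : U f = ∑ j ∈ univ.filter (fun j => ∀ k, f k ∉ C j), μ j := rfl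
    linarith [hf, hcompl]
  · intro j hj
    rw [Finset.mem_filter] at hj
    obtain ⟨_, k, hk⟩ := hj
    rw [hC] at hk
    simp only [Finset.mem_filter, Finset.mem_univ, true_and] at hk
    exact ⟨k, hk⟩
end

section
/- (Multiplicative Weights regret bound) For any sequence of loss vectors z¹,…,z^T ∈ [-1,1]^m, γ ∈ (0,1/2], and initial point w¹ in the m-dimensional probability simplex with all coordinates positive, the Multiplicative Weights algorithm (updating ŵ^{t+1}_i = w^t_i(1 - γ z^t_i) and normalizing) produces weights w¹,…,w^T such that for every w in the simplex: Σ_{t∈[T]} ⟨w^t, z^t⟩ - Σ_{t∈[T]} ⟨w, z^t⟩ ≤ KL(w ‖ w¹)/γ + γT, where KL(w ‖ w¹) = Σᵢ wᵢ ln(wᵢ/w¹ᵢ). -/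
open Finset

/-- `log(1-u) ≥ -u - u²` for `|u| ≤ 1/2`. -/
lemma log_one_sub_ge {u : ℝ} (h1 : -(1/2) ≤ u) (h2 : u ≤ 1/2) :
    -u - u^2 ≤ Real.log (1 - u) := by
  have hpos : (0:ℝ) < 1 - u := by linarith
  rw [Real.le_log_iff_exp_le hpos]
  have hE : Real.exp (-u - u^2) * Real.exp (u + u^2) = 1 := by
    rw [← Real.exp_add]; ring_nf; exact Real.exp_zero
  have hEpos : 0 < Real.exp (-u - u^2) := Real.exp_pos _
  rcases le_or_gt u 0 with hu | hu
  · have he : (u + u^2) + 1 ≤ Real.exp (u + u^2) := Real.add_one_le_exp _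
    nlinarith [mul_pos hEpos hpos]
  · have ht : (0:ℝ) ≤ u + u^2 := by nlinarith
    have he := Real.quadratic_le_exp_of_nonneg ht
    nlinarith [mul_pos hEpos hpos]

/-- Multiplicative Weights regret bound: for loss vectors in `[-1,1]^m`,
`γ ∈ (0,1/2]`, and the MW iterates `w t`, the regret against any point `v`
of the simplex is at most `KL(v‖w⁰)/γ + γT`. -/
theorem stmt8 (m T : ℕ) (hm : 0 < m)
    (z : ℕ → Fin m → ℝ) (hz : ∀ t i, z t i ∈ Set.Icc (-1:ℝ) 1)
    (γ : ℝ) (hγ : γ ∈ Set.Ioc (0:ℝ) (1/2))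
    (w : ℕ → Fin m → ℝ)
    (hw0pos : ∀ i, 0 < w 0 i) (hw0sum : ∑ i, w 0 i = 1)
    (hupd : ∀ t i, w (t+1) i =
      w t i * (1 - γ * z t i) / ∑ j, w t j * (1 - γ * z t j))
    (v : Fin m → ℝ) (hv0 : ∀ i, 0 ≤ v i) (hv1 : ∑ i, v i = 1) :
    (∑ t ∈ range T, ∑ i, w t i * z t i) - (∑ t ∈ range T, ∑ i, v i * z t i)
      ≤ (∑ i, v i * Real.log (v i / w 0 i)) / γ + γ * T := by
  obtain ⟨hγ0, hγ2⟩ := hγ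
  have hne : (Finset.univ : Finset (Fin m)).Nonempty := by
    simpa [Finset.univ_nonempty_iff, Fin.pos_iff_nonempty] using hm
  have hfac : ∀ t i, (0:ℝ) < 1 - γ * z t i := by
    intro t i
    have h1 := (hz t i).1; have h2 := (hz t i).2
    nlinarith
  have hinv : ∀ t, (∀ i, 0 < w t i) ∧ (∑ i, w t i) = 1 := by
    intro t
    induction t with
    | zero => exact ⟨hw0pos, hw0sum⟩
    | succ t ih =>
      obtain ⟨hp, hs⟩ := ih
      have hZpos : 0 < ∑ j, w t j * (1 - γ * z t j) :=
        Finset.sum_pos (fun j _ => mul_pos (hp j) (hfac t j)) hne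
      constructor
      · intro i
        rw [hupd t i]
        exact div_pos (mul_pos (hp i) (hfac t i)) hZpos
      · rw [Finset.sum_congr rfl (fun i _ => hupd t i), ← Finset.sum_div,
          div_self (ne_of_gt hZpos)]
  set KL : ℕ → ℝ := fun t => ∑ i, v i * Real.log (v i / w t i) with hKL
  have hstep : ∀ t, γ * ((∑ i, w t i * z t i) - (∑ i, v i * z t i))
      ≤ KL t - KL (t+1) + γ^2 := by
    intro t
    obtain ⟨hp, hs⟩ := hinv t
    obtain ⟨hp', _⟩ := hinv (t+1)
    set Z : ℝ := ∑ j, w t j * (1 - γ * z t j) with hZ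
    have hZpos : 0 < Z := Finset.sum_pos (fun j _ => mul_pos (hp j) (hfac t j)) hne
    have hZval : Z = 1 - γ * ∑ i, w t i * z t i := by
      have h : Z = (∑ i, w t i) - γ * ∑ i, w t i * z t i := by
        rw [hZ, Finset.mul_sum, ← Finset.sum_sub_distrib]
        exact Finset.sum_congr rfl fun i _ => by ring
      rw [h, hs]
    have hdiff : KL t - KL (t+1) = (∑ i, v i * Real.log (1 - γ * z t i)) - Real.log Z := by
      have h : KL t - KL (t+1)
          = ∑ i, (v i * Real.log (v i / w t i) - v i * Real.log (v i / w (t+1) i)) := by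
        rw [hKL, ← Finset.sum_sub_distrib]
      rw [h]
      have hterm : ∀ i ∈ Finset.univ, v i * Real.log (v i / w t i) - v i * Real.log (v i / w (t+1) i)
          = v i * Real.log (1 - γ * z t i) - v i * Real.log Z := by
        intro i _
        rcases eq_or_lt_of_le (hv0 i) with h0 | h0
        · simp [← h0]
        · have hwti := hp i
          have hw1i := hp' i
          have hlogeq : Real.log (v i / w (t+1) i) = Real.log (v i / w t i)
              - Real.log (1 - γ * z t i) + Real.log Z := by
            rw [hupd t i]
            rw [Real.log_div (ne_of_gt h0) (ne_of_gt (div_pos (mul_pos hwti (hfac t i)) hZpos)),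
              Real.log_div (ne_of_gt h0) (ne_of_gt hwti),
              Real.log_div (ne_of_gt (mul_pos hwti (hfac t i))) (ne_of_gt hZpos),
              Real.log_mul (ne_of_gt hwti) (ne_of_gt (hfac t i))]
            ring
          rw [hlogeq]; ring
      rw [Finset.sum_congr rfl hterm, Finset.sum_sub_distrib, ← Finset.sum_mul, hv1, one_mul]
    rw [hdiff]
    have hlogsum : (∑ i, v i * (-(γ * z t i) - γ^2)) ≤ ∑ i, v i * Real.log (1 - γ * z t i) := by
      apply Finset.sum_le_sum
      intro i _
      apply mul_le_mul_of_nonneg_left _ (hv0 i)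
      have h1 := (hz t i).1; have h2 := (hz t i).2
      have hlg := log_one_sub_ge (u := γ * z t i) (by nlinarith) (by nlinarith)
      have hz1 : z t i ^ 2 ≤ 1 := by nlinarith
      have hz2 : (γ * z t i)^2 ≤ γ^2 := by
        calc (γ * z t i)^2 = γ^2 * z t i ^ 2 := by ring
        _ ≤ γ^2 * 1 := mul_le_mul_of_nonneg_left hz1 (sq_nonneg γ)
        _ = γ^2 := mul_one _
      linarith
    have hlogZ : Real.log Z ≤ Z - 1 := Real.log_le_sub_one_of_pos hZpos
    have hsum2 : (∑ i, v i * (-(γ * z t i) - γ^2))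
        = -γ * (∑ i, v i * z t i) - γ^2 := by
      have h : (∑ i, v i * (-(γ * z t i) - γ^2))
          = -γ * (∑ i, v i * z t i) - γ^2 * ∑ i, v i := by
        rw [neg_mul, Finset.mul_sum, Finset.mul_sum, ← Finset.sum_neg_distrib,
          ← Finset.sum_sub_distrib]
        exact Finset.sum_congr rfl fun i _ => by ring
      rw [h, hv1, mul_one]
    linarith
  have hKLT : 0 ≤ KL T := by
    obtain ⟨hp, hs⟩ := hinv T
    have hterm : ∀ i ∈ Finset.univ, v i - w T i ≤ v i * Real.log (v i / w T i) := by
      intro i _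
      rcases eq_or_lt_of_le (hv0 i) with h0 | h0
      · rw [← h0]; simpa using (hp i).le
      · have hlog : Real.log (w T i / v i) ≤ w T i / v i - 1 :=
          Real.log_le_sub_one_of_pos (div_pos (hp i) h0)
        have heq : Real.log (v i / w T i) = - Real.log (w T i / v i) := by
          rw [Real.log_div (ne_of_gt h0) (ne_of_gt (hp i)),
            Real.log_div (ne_of_gt (hp i)) (ne_of_gt h0)]; ring
        rw [heq]
        have h3 : w T i / v i * v i = w T i := by field_simp
        nlinarith
    have hsum := Finset.sum_le_sum hterm
    rw [Finset.sum_sub_distrib, hv1, hs] at hsum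
    simpa using hsum
  have hfin : γ * ((∑ t ∈ range T, ∑ i, w t i * z t i) - (∑ t ∈ range T, ∑ i, v i * z t i))
      ≤ KL 0 + γ^2 * T := by
    have h1 : ∀ t ∈ range T, γ * ((∑ i, w t i * z t i) - (∑ i, v i * z t i))
        ≤ (KL t - KL (t+1)) + γ^2 := fun t _ => hstep t
    have h2 := Finset.sum_le_sum h1
    rw [Finset.sum_add_distrib, Finset.sum_range_sub' KL, Finset.sum_const,
      Finset.card_range, nsmul_eq_mul] at h2
    have h3 : γ * ((∑ t ∈ range T, ∑ i, w t i * z t i) - (∑ t ∈ range T, ∑ i, v i * z t i))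
        = ∑ t ∈ range T, γ * ((∑ i, w t i * z t i) - (∑ i, v i * z t i)) := by
      rw [← Finset.mul_sum, Finset.sum_sub_distrib]
    rw [h3]
    nlinarith [hKLT]
  have hR : (∑ t ∈ range T, ∑ i, w t i * z t i) - (∑ t ∈ range T, ∑ i, v i * z t i)
      ≤ (KL 0 + γ^2 * T) / γ := by
    rw [le_div_iff₀ hγ0]
    linarith
  calc _ ≤ (KL 0 + γ^2 * T) / γ := hR
    _ = KL 0 / γ + γ * T := by field_simp
end

section
/- Let X be a finite type, μ a probability measure on a finite family D of probability distributions on X, and D₀ a probability distribution on X. Then κ̄_v(μ, D₀) ≥ (1/4)·κ̄₁(μ, D₀), where κ̄_v(μ,D₀) = sup over φ : X → [0,1] of E_{D∼μ}[|√(E_D[φ]) - √(E_{D₀}[φ])|] and κ̄₁(μ,D₀) = sup over φ : X → [-1,1] of E_{D∼μ}[|E_D[φ] - E_{D₀}[φ]|]. -/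
open Finset

/-- `κ̄_v(μ, D₀)`: the supremum over `φ : X → [0,1]` of the average (over
`D ∼ μ`) discrimination `|√(E_D[φ]) - √(E_{D₀}[φ])|`. -/
noncomputable def kbarv {X J : Type*} [Fintype X] [Fintype J]
    (μ : J → ℝ) (Ds : J → X → ℝ) (D0 : X → ℝ) : ℝ :=
  ⨆ φ : {φ : X → ℝ // ∀ x, φ x ∈ Set.Icc (0:ℝ) 1},
    ∑ j, μ j * |Real.sqrt (expec (Ds j) φ.1) - Real.sqrt (expec D0 φ.1)|

/-- `κ̄₁(μ, D₀)`: the supremum over `φ : X → [-1,1]` of the average (over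
`D ∼ μ`) discrimination `|E_D[φ] - E_{D₀}[φ]|`. -/
noncomputable def kbar1 {X J : Type*} [Fintype X] [Fintype J]
    (μ : J → ℝ) (Ds : J → X → ℝ) (D0 : X → ℝ) : ℝ :=
  ⨆ φ : {φ : X → ℝ // ∀ x, φ x ∈ Set.Icc (-1:ℝ) 1},
    ∑ j, μ j * |expec (Ds j) φ.1 - expec D0 φ.1|

lemma expec_nonneg' {X : Type*} [Fintype X] {D φ : X → ℝ} (hD : IsDist D)
    (hφ : ∀ x, 0 ≤ φ x) : 0 ≤ expec D φ :=
  Finset.sum_nonneg fun x _ => mul_nonneg (hD.1 x) (hφ x)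

lemma expec_le_one' {X : Type*} [Fintype X] {D φ : X → ℝ} (hD : IsDist D)
    (hφ : ∀ x, φ x ≤ 1) : expec D φ ≤ 1 := by
  calc expec D φ ≤ ∑ x, D x * 1 :=
        Finset.sum_le_sum fun x _ => mul_le_mul_of_nonneg_left (hφ x) (hD.1 x)
  _ = 1 := by simp [hD.2]

lemma abs_sub_le_two_sqrt {a b : ℝ} (ha : 0 ≤ a) (ha1 : a ≤ 1) (hb : 0 ≤ b) (hb1 : b ≤ 1) :
    |a - b| ≤ 2 * |Real.sqrt a - Real.sqrt b| := by
  have h : a - b = (Real.sqrt a - Real.sqrt b) * (Real.sqrt a + Real.sqrt b) := by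
    have := Real.sq_sqrt ha
    have := Real.sq_sqrt hb
    ring_nf
    nlinarith [Real.sq_sqrt ha, Real.sq_sqrt hb]
  rw [h, abs_mul]
  have hsa : Real.sqrt a ≤ 1 := by
    rw [show (1:ℝ) = Real.sqrt 1 by simp]; exact Real.sqrt_le_sqrt ha1
  have hsb : Real.sqrt b ≤ 1 := by
    rw [show (1:ℝ) = Real.sqrt 1 by simp]; exact Real.sqrt_le_sqrt hb1
  have h2 : |Real.sqrt a + Real.sqrt b| ≤ 2 := by
    rw [abs_of_nonneg (by positivity)]; linarith
  calc |Real.sqrt a - Real.sqrt b| * |Real.sqrt a + Real.sqrt b|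
      ≤ |Real.sqrt a - Real.sqrt b| * 2 :=
        mul_le_mul_of_nonneg_left h2 (abs_nonneg _)
  _ = 2 * |Real.sqrt a - Real.sqrt b| := by ring

theorem stmt10 {X J : Type*} [Fintype X] [Fintype J] [Nonempty J]
    (D0 : X → ℝ) (hD0 : IsDist D0)
    (Ds : J → X → ℝ) (hDs : ∀ j, IsDist (Ds j))
    (μ : J → ℝ) (hμ : IsDist μ) :
    (1 / 4) * kbar1 μ Ds D0 ≤ kbarv μ Ds D0 := by
  -- boundedness of the kbarv family
  have hbdd : BddAbove (Set.range fun φ : {φ : X → ℝ // ∀ x, φ x ∈ Set.Icc (0:ℝ) 1} =>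
      ∑ j, μ j * |Real.sqrt (expec (Ds j) φ.1) - Real.sqrt (expec D0 φ.1)|) := by
    refine ⟨1, ?_⟩
    rintro y ⟨φ, rfl⟩
    have hterm : ∀ j ∈ Finset.univ,
        μ j * |Real.sqrt (expec (Ds j) φ.1) - Real.sqrt (expec D0 φ.1)| ≤ μ j * 1 := by
      intro j _
      refine mul_le_mul_of_nonneg_left ?_ (hμ.1 j)
      have h1 : ∀ D : X → ℝ, IsDist D → Real.sqrt (expec D φ.1) ∈ Set.Icc (0:ℝ) 1 := by
        intro D hD
        constructor
        · exact Real.sqrt_nonneg _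
        · exact Real.sqrt_le_one.mpr (expec_le_one' hD fun x => (φ.2 x).2)
      obtain ⟨ha0, ha1⟩ := h1 _ (hDs j)
      obtain ⟨hb0, hb1⟩ := h1 _ hD0
      rw [abs_sub_le_iff]; constructor <;> linarith
    calc ∑ j, μ j * |Real.sqrt (expec (Ds j) φ.1) - Real.sqrt (expec D0 φ.1)|
        ≤ ∑ j, μ j * 1 := Finset.sum_le_sum hterm
    _ = 1 := by simp [hμ.2]
  haveI : Nonempty {ψ : X → ℝ // ∀ x, ψ x ∈ Set.Icc (-1:ℝ) 1} :=
    ⟨⟨fun _ => 0, fun x => by simp⟩⟩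
  have key : kbar1 μ Ds D0 ≤ 4 * kbarv μ Ds D0 := by
    apply ciSup_le
    intro φ
    -- positive and negative parts
    set φp : X → ℝ := fun x => max (φ.1 x) 0 with hφp
    set φm : X → ℝ := fun x => max (-φ.1 x) 0 with hφm
    have hφpmem : ∀ x, φp x ∈ Set.Icc (0:ℝ) 1 :=
      fun x => ⟨le_max_right _ _, max_le (φ.2 x).2 zero_le_one⟩
    have hφmmem : ∀ x, φm x ∈ Set.Icc (0:ℝ) 1 :=
      fun x => ⟨le_max_right _ _, max_le (by linarith [(φ.2 x).1]) zero_le_one⟩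
    have hsplit : ∀ x, φ.1 x = φp x - φm x := by
      intro x
      simp only [hφp, hφm]
      rcases le_or_gt 0 (φ.1 x) with h | h
      · rw [max_eq_left h, max_eq_right (by linarith)]; ring
      · rw [max_eq_right h.le, max_eq_left (by linarith)]; ring
    have hexpec : ∀ D : X → ℝ, expec D φ.1 = expec D φp - expec D φm := by
      intro D
      simp only [expec, ← Finset.sum_sub_distrib]
      exact Finset.sum_congr rfl fun x _ => by rw [hsplit x]; ring
    -- pointwise bound
    have hpt : ∀ j, μ j * |expec (Ds j) φ.1 - expec D0 φ.1| ≤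
        2 * (μ j * |Real.sqrt (expec (Ds j) φp) - Real.sqrt (expec D0 φp)|) +
        2 * (μ j * |Real.sqrt (expec (Ds j) φm) - Real.sqrt (expec D0 φm)|) := by
      intro j
      have hb : ∀ (ψ : X → ℝ), (∀ x, ψ x ∈ Set.Icc (0:ℝ) 1) →
          |expec (Ds j) ψ - expec D0 ψ| ≤
          2 * |Real.sqrt (expec (Ds j) ψ) - Real.sqrt (expec D0 ψ)| := by
        intro ψ hψ
        exact abs_sub_le_two_sqrt (expec_nonneg' (hDs j) fun x => (hψ x).1)
          (expec_le_one' (hDs j) fun x => (hψ x).2)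
          (expec_nonneg' hD0 fun x => (hψ x).1)
          (expec_le_one' hD0 fun x => (hψ x).2)
      have htri : |expec (Ds j) φ.1 - expec D0 φ.1| ≤
          |expec (Ds j) φp - expec D0 φp| + |expec (Ds j) φm - expec D0 φm| := by
        rw [hexpec (Ds j), hexpec D0]
        have := abs_sub (expec (Ds j) φp - expec D0 φp) (expec (Ds j) φm - expec D0 φm)
        calc |expec (Ds j) φp - expec (Ds j) φm - (expec D0 φp - expec D0 φm)|
            = |(expec (Ds j) φp - expec D0 φp) - (expec (Ds j) φm - expec D0 φm)| := by ring_nf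
        _ ≤ _ := abs_sub _ _
      have := hb φp hφpmem
      have := hb φm hφmmem
      nlinarith [hμ.1 j, abs_nonneg (expec (Ds j) φ.1 - expec D0 φ.1)]
    calc ∑ j, μ j * |expec (Ds j) φ.1 - expec D0 φ.1|
        ≤ ∑ j, (2 * (μ j * |Real.sqrt (expec (Ds j) φp) - Real.sqrt (expec D0 φp)|) +
            2 * (μ j * |Real.sqrt (expec (Ds j) φm) - Real.sqrt (expec D0 φm)|)) :=
          Finset.sum_le_sum fun j _ => hpt j
    _ = 2 * (∑ j, μ j * |Real.sqrt (expec (Ds j) φp) - Real.sqrt (expec D0 φp)|) +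
        2 * (∑ j, μ j * |Real.sqrt (expec (Ds j) φm) - Real.sqrt (expec D0 φm)|) := by
          rw [Finset.sum_add_distrib, ← Finset.mul_sum, ← Finset.mul_sum]
    _ ≤ 2 * kbarv μ Ds D0 + 2 * kbarv μ Ds D0 := by
          have h1 := le_ciSup hbdd (⟨φp, hφpmem⟩ : {ψ : X → ℝ // ∀ x, ψ x ∈ Set.Icc (0:ℝ) 1})
          have h2 := le_ciSup hbdd (⟨φm, hφmmem⟩ : {ψ : X → ℝ // ∀ x, ψ x ∈ Set.Icc (0:ℝ) 1})
          simp only [kbarv]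
          gcongr
    _ = 4 * kbarv μ Ds D0 := by ring
  linarith
end

section
/- Let X be a finite type, μ a probability measure on a finite family D of probability distributions on X all absolutely continuous with respect to D₀ in the sense of having D₀-square-integrable densities. Then κ̄_v(μ, D₀) ≤ κ̄₂(μ, D₀), where κ̄_v(μ,D₀) = sup_{φ:X→[0,1]} E_{D∼μ}[|√(E_D[φ]) - √(E_{D₀}[φ])|] and κ̄₂(μ,D₀) = sup over φ : X → ℝ with E_{D₀}[φ²] = 1 of E_{D∼μ}[|E_D[φ] - E_{D₀}[φ]|]. -/
/-!
Fix `φ : X → [0,1]` and put `s = ‖φ‖_{D₀} = √(E_{D₀}[φ²])`. Since `φ² ≤ φ`, we have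
`√(E_{D₀}[φ]) ≥ s`, hence
`|√(E_D[φ]) - √(E_{D₀}[φ])| = |E_D[φ] - E_{D₀}[φ]| / (√(E_D[φ]) + √(E_{D₀}[φ])) ≤ |E_D[φ/s] - E_{D₀}[φ/s]|`,
and `φ/s` is admissible for `κ̄₂`. If `s = 0`, then `φ` vanishes on the support of `D₀`, so by
absolute continuity every expectation of `φ` vanishes. The supremum defining `κ̄₂` is bounded
because `E_{D₀}[ψ²] = 1` forces `|ψ x| ≤ 1 + D₀(x)⁻¹` wherever `D₀ x ≠ 0`.
-/

open Finset

/-- `κ̄₂(μ, D₀)`: the supremum over `φ : X → ℝ` with `E_{D₀}[φ²] = 1` of the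
average (over `D ∼ μ`) discrimination `|E_D[φ] - E_{D₀}[φ]|`. -/
noncomputable def kbar2 {X J : Type*} [Fintype X] [Fintype J]
    (μ : J → ℝ) (Ds : J → X → ℝ) (D0 : X → ℝ) : ℝ :=
  ⨆ φ : {φ : X → ℝ // ∑ x, D0 x * φ x ^ 2 = 1},
    ∑ j, μ j * |expec (Ds j) φ.1 - expec D0 φ.1|

lemma abs_sqrt_sub_sqrt_le_div {a b s : ℝ} (ha : 0 ≤ a) (hs : 0 < s) (hsb : s ≤ √b) :
    |√a - √b| ≤ |a - b| / s := by
  have hb : 0 ≤ b := Real.sqrt_pos.mp (hs.trans_le hsb) |>.le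
  have hdiff : a - b = (√a - √b) * (√a + √b) := by
    linear_combination Real.sq_sqrt hb - Real.sq_sqrt ha
  rw [le_div_iff₀ hs, hdiff, abs_mul, abs_of_nonneg (add_nonneg (Real.sqrt_nonneg a) (Real.sqrt_nonneg b))]
  gcongr
  linarith [Real.sqrt_nonneg a]

section Expectation

variable {X : Type*} [Fintype X]

lemma expec_div_const (D φ : X → ℝ) (s : ℝ) :
    expec D (fun x => φ x / s) = expec D φ / s := by
  simp only [expec, Finset.sum_div, mul_div_assoc]

lemma sum_mul_sq_le_expec {D φ : X → ℝ} (hD : ∀ x, 0 ≤ D x) (hφ : ∀ x, φ x ∈ Set.Icc (0:ℝ) 1) :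
    ∑ x, D x * φ x ^ 2 ≤ expec D φ := by
  refine Finset.sum_le_sum fun x _ => mul_le_mul_of_nonneg_left ?_ (hD x)
  obtain ⟨h0, h1⟩ := hφ x
  nlinarith

lemma expec_eq_zero_of_sum_mul_sq_eq_zero {D0 D φ : X → ℝ} (hD0 : ∀ x, 0 ≤ D0 x)
    (habs : ∀ x, D0 x = 0 → D x = 0) (hφ : ∑ x, D0 x * φ x ^ 2 = 0) : expec D φ = 0 := by
  refine Finset.sum_eq_zero fun x _ => ?_
  have h := (Finset.sum_eq_zero_iff_of_nonneg fun x _ => mul_nonneg (hD0 x) (sq_nonneg (φ x))).mp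
    hφ x (Finset.mem_univ x)
  rcases mul_eq_zero.mp h with h0 | hφx
  · rw [habs x h0, zero_mul]
  · rw [pow_eq_zero_iff two_ne_zero |>.mp hφx, mul_zero]

lemma abs_expec_le_of_sum_mul_sq_le_one {D0 D ψ : X → ℝ} (hD0 : ∀ x, 0 ≤ D0 x)
    (hD : ∀ x, 0 ≤ D x) (habs : ∀ x, D0 x = 0 → D x = 0) (hψ : ∑ x, D0 x * ψ x ^ 2 ≤ 1) :
    |expec D ψ| ≤ ∑ x, D x * (1 + (D0 x)⁻¹) := by
  refine (Finset.abs_sum_le_sum_abs _ _).trans (Finset.sum_le_sum fun x _ => ?_)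
  rw [abs_mul, abs_of_nonneg (hD x)]
  rcases (hD0 x).eq_or_lt with h0 | hpos
  · rw [habs x h0.symm, zero_mul, zero_mul]
  refine mul_le_mul_of_nonneg_left ?_ (hD x)
  have hsq : D0 x * ψ x ^ 2 ≤ 1 :=
    (Finset.single_le_sum (fun y _ => mul_nonneg (hD0 y) (sq_nonneg (ψ y)))
      (Finset.mem_univ x)).trans hψ
  have hsq' : ψ x ^ 2 ≤ (D0 x)⁻¹ := by
    rwa [← one_div, le_div_iff₀' hpos]
  nlinarith [sq_nonneg (|ψ x| - 1), sq_abs (ψ x)]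

end Expectation

section Discrimination

variable {X J : Type*} [Fintype X] [Fintype J] {μ : J → ℝ} {Ds : J → X → ℝ} {D0 : X → ℝ}

lemma kbar2_nonneg (hμ : ∀ j, 0 ≤ μ j) : 0 ≤ kbar2 μ Ds D0 :=
  Real.iSup_nonneg fun _ => Finset.sum_nonneg fun j _ => mul_nonneg (hμ j) (abs_nonneg _)

lemma le_kbar2 (hD0 : ∀ x, 0 ≤ D0 x) (hDs : ∀ j x, 0 ≤ Ds j x)
    (habs : ∀ j x, D0 x = 0 → Ds j x = 0) (hμ : ∀ j, 0 ≤ μ j) {ψ : X → ℝ}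
    (hψ : ∑ x, D0 x * ψ x ^ 2 = 1) :
    ∑ j, μ j * |expec (Ds j) ψ - expec D0 ψ| ≤ kbar2 μ Ds D0 := by
  refine le_ciSup (f := fun ψ : {ψ : X → ℝ // ∑ x, D0 x * ψ x ^ 2 = 1} =>
    ∑ j, μ j * |expec (Ds j) ψ.1 - expec D0 ψ.1|) ?_ ⟨ψ, hψ⟩
  refine ⟨∑ j, μ j * (∑ x, Ds j x * (1 + (D0 x)⁻¹) + ∑ x, D0 x * (1 + (D0 x)⁻¹)), ?_⟩
  rintro _ ⟨⟨ψ, hψ⟩, rfl⟩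
  refine Finset.sum_le_sum fun j _ => mul_le_mul_of_nonneg_left ?_ (hμ j)
  exact (abs_sub _ _).trans (add_le_add
    (abs_expec_le_of_sum_mul_sq_le_one hD0 (hDs j) (habs j) hψ.le)
    (abs_expec_le_of_sum_mul_sq_le_one hD0 hD0 (fun _ h => h) hψ.le))

lemma sum_abs_sqrt_sub_le_kbar2 (hD0 : ∀ x, 0 ≤ D0 x) (hDs : ∀ j x, 0 ≤ Ds j x)
    (habs : ∀ j x, D0 x = 0 → Ds j x = 0) (hμ : ∀ j, 0 ≤ μ j) {φ : X → ℝ}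
    (hφ : ∀ x, φ x ∈ Set.Icc (0:ℝ) 1) :
    ∑ j, μ j * |√(expec (Ds j) φ) - √(expec D0 φ)| ≤ kbar2 μ Ds D0 := by
  rcases (Finset.sum_nonneg fun x _ => mul_nonneg (hD0 x) (sq_nonneg (φ x))).eq_or_lt with
    hzero | hpos
  · have hvanish (D : X → ℝ) (hD : ∀ x, D0 x = 0 → D x = 0) : expec D φ = 0 :=
      expec_eq_zero_of_sum_mul_sq_eq_zero hD0 hD hzero.symm
    simp only [hvanish _ (habs _), hvanish D0 fun _ h => h, sub_self, abs_zero, mul_zero,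
      Finset.sum_const_zero]
    exact kbar2_nonneg hμ
  set s := √(∑ x, D0 x * φ x ^ 2)
  have hs : 0 < s := Real.sqrt_pos.mpr hpos
  have hnormalized : ∑ x, D0 x * (φ x / s) ^ 2 = 1 := by
    simp only [div_pow, mul_div_assoc', ← Finset.sum_div, Real.sq_sqrt hpos.le, s]
    exact div_self hpos.ne'
  have hsqrt (j : J) : |√(expec (Ds j) φ) - √(expec D0 φ)| ≤
      |expec (Ds j) (fun x => φ x / s) - expec D0 (fun x => φ x / s)| := by
    rw [expec_div_const, expec_div_const, ← sub_div, abs_div, abs_of_pos hs]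
    exact abs_sqrt_sub_sqrt_le_div (Finset.sum_nonneg fun x _ => mul_nonneg (hDs j x) (hφ x).1) hs
      (Real.sqrt_le_sqrt (sum_mul_sq_le_expec hD0 hφ))
  calc ∑ j, μ j * |√(expec (Ds j) φ) - √(expec D0 φ)|
      ≤ ∑ j, μ j * |expec (Ds j) (fun x => φ x / s) - expec D0 (fun x => φ x / s)| :=
        Finset.sum_le_sum fun j _ => mul_le_mul_of_nonneg_left (hsqrt j) (hμ j)
    _ ≤ kbar2 μ Ds D0 := le_kbar2 hD0 hDs habs hμ hnormalized

end Discrimination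

theorem stmt12_general {X J : Type*} [Fintype X] [Fintype J]
    (D0 : X → ℝ) (hD0 : IsDist D0)
    (Ds : J → X → ℝ) (hDs : ∀ j, IsDist (Ds j))
    (habs : ∀ j x, D0 x = 0 → Ds j x = 0)
    (μ : J → ℝ) (hμ : IsDist μ) :
    kbarv μ Ds D0 ≤ kbar2 μ Ds D0 := by
  have : Nonempty {φ : X → ℝ // ∀ x, φ x ∈ Set.Icc (0:ℝ) 1} :=
    ⟨⟨0, fun _ => ⟨le_rfl, zero_le_one⟩⟩⟩
  exact ciSup_le fun φ =>
    sum_abs_sqrt_sub_le_kbar2 hD0.1 (fun j => (hDs j).1) habs hμ.1 φ.2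

theorem stmt12 {X J : Type*} [Fintype X] [Fintype J] [Nonempty J]
    (D0 : X → ℝ) (hD0 : IsDist D0)
    (Ds : J → X → ℝ) (hDs : ∀ j, IsDist (Ds j))
    (habs : ∀ j x, D0 x = 0 → Ds j x = 0)
    (μ : J → ℝ) (hμ : IsDist μ) :
    kbarv μ Ds D0 ≤ kbar2 μ Ds D0 :=
  stmt12_general D0 hD0 Ds hDs habs μ hμ
end

section
/- Let D₀ be a probability distribution with full support on a finite set X and let D be a finite nonempty family of probability distributions on X. For D ∈ D define the function D̂(x) = D(x)/D₀(x) - 1. Then ρ(D, D₀) ≥ κ̄₂(D, D₀)², where ρ(D,D₀) = (1/|D|²)·Σ_{D,D'∈D} |E_{x∼D₀}[D̂(x)·D̂'(x)]| is the average correlation, and κ̄₂(D,D₀) = (1/|D|)·sup over φ : X → ℝ with E_{D₀}[φ²] = 1 of Σ_{D∈D} |E_D[φ] - E_{D₀}[φ]|. -/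
open Finset

/-- The relative density `D̂(x) = D(x)/D₀(x) - 1`. -/
noncomputable def dhat {X : Type*} (D D0 : X → ℝ) (x : X) : ℝ := D x / D0 x - 1

/-- The average correlation `ρ(D, D₀)` upper bounds `κ̄₂(D, D₀)²`
(for a finite family of distributions relative to a fully supported `D₀`). -/
theorem stmt13 {X J : Type*} [Fintype X] [Fintype J] [Nonempty J]
    (D0 : X → ℝ) (hD0 : IsDist D0) (hpos : ∀ x, 0 < D0 x)
    (Ds : J → X → ℝ) (hDs : ∀ j, IsDist (Ds j)) :
    (⨆ φ : {φ : X → ℝ // ∑ x, D0 x * φ x ^ 2 = 1},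
        (Fintype.card J : ℝ)⁻¹ * ∑ j, |expec (Ds j) φ.1 - expec D0 φ.1|) ^ 2
      ≤ ((Fintype.card J : ℝ) ^ 2)⁻¹ *
          ∑ j, ∑ j', |∑ x, D0 x * (dhat (Ds j) D0 x * dhat (Ds j') D0 x)| := by
  classical
  have hN : (0 : ℝ) < (Fintype.card J : ℝ) := by
    exact_mod_cast Fintype.card_pos
  set N : ℝ := (Fintype.card J : ℝ) with hNdef
  set S : ℝ := ∑ j, ∑ j', |∑ x, D0 x * (dhat (Ds j) D0 x * dhat (Ds j') D0 x)| with hSdef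
  have hS : 0 ≤ S := by positivity
  have hC : 0 ≤ (N ^ 2)⁻¹ * S := by positivity
  have key : ∀ φ : {φ : X → ℝ // ∑ x, D0 x * φ x ^ 2 = 1},
      N⁻¹ * ∑ j, |expec (Ds j) φ.1 - expec D0 φ.1| ≤ Real.sqrt ((N ^ 2)⁻¹ * S) := by
    rintro ⟨φ, hφ⟩
    set a : J → ℝ := fun j => ∑ x, D0 x * (dhat (Ds j) D0 x * φ x) with ha
    have hdiff : ∀ j, expec (Ds j) φ - expec D0 φ = a j := by
      intro j
      simp only [expec, ha, dhat, ← Finset.sum_sub_distrib]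
      refine Finset.sum_congr rfl fun x _ => ?_
      have h0 := (hpos x).ne'
      field_simp
    set s : J → ℝ := fun j => if a j < 0 then -1 else 1 with hs
    have hs1 : ∀ j, |s j| = 1 := by
      intro j; simp only [hs]; split <;> norm_num
    have hsa : ∀ j, |a j| = s j * a j := by
      intro j; simp only [hs]; split
      · rw [abs_of_neg (by assumption)]; ring
      · rw [abs_of_nonneg (not_lt.1 (by assumption))]; ring
    set ψ : X → ℝ := fun x => ∑ j, s j * dhat (Ds j) D0 x with hψ
    have hsum : ∑ j, |a j| = ∑ x, (Real.sqrt (D0 x) * ψ x) * (Real.sqrt (D0 x) * φ x) := by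
      have : ∀ x, (Real.sqrt (D0 x) * ψ x) * (Real.sqrt (D0 x) * φ x)
          = ∑ j, s j * (D0 x * (dhat (Ds j) D0 x * φ x)) := by
        intro x
        have hx : Real.sqrt (D0 x) * Real.sqrt (D0 x) = D0 x :=
          Real.mul_self_sqrt (hpos x).le
        simp only [hψ, Finset.sum_mul, Finset.mul_sum]
        refine Finset.sum_congr rfl fun j _ => ?_
        rw [show Real.sqrt (D0 x) * (s j * dhat (Ds j) D0 x) * (Real.sqrt (D0 x) * φ x)
          = (Real.sqrt (D0 x) * Real.sqrt (D0 x)) * (s j * (dhat (Ds j) D0 x * φ x)) by ring, hx]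
        ring
      simp only [this]
      rw [Finset.sum_comm]
      refine Finset.sum_congr rfl fun j _ => ?_
      rw [hsa j, ha, Finset.mul_sum]
    have hg2 : ∑ x, (Real.sqrt (D0 x) * φ x) ^ 2 = 1 := by
      rw [← hφ]
      refine Finset.sum_congr rfl fun x _ => ?_
      rw [mul_pow, Real.sq_sqrt (hpos x).le]
    have hf2 : ∑ x, (Real.sqrt (D0 x) * ψ x) ^ 2 ≤ S := by
      have expand : ∑ x, (Real.sqrt (D0 x) * ψ x) ^ 2
          = ∑ j, ∑ j', s j * s j' *
              ∑ x, D0 x * (dhat (Ds j) D0 x * dhat (Ds j') D0 x) := by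
        have : ∀ x, (Real.sqrt (D0 x) * ψ x) ^ 2
            = ∑ j, ∑ j', s j * s j' * (D0 x * (dhat (Ds j) D0 x * dhat (Ds j') D0 x)) := by
          intro x
          have hx : Real.sqrt (D0 x) * Real.sqrt (D0 x) = D0 x :=
            Real.mul_self_sqrt (hpos x).le
          rw [mul_pow, Real.sq_sqrt (hpos x).le, hψ, sq, Finset.sum_mul_sum,
            Finset.mul_sum]
          refine Finset.sum_congr rfl fun j _ => ?_
          rw [Finset.mul_sum]
          refine Finset.sum_congr rfl fun j' _ => ?_
          ring
        simp only [this, Finset.mul_sum]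
        rw [Finset.sum_comm]
        refine Finset.sum_congr rfl fun j _ => ?_
        rw [Finset.sum_comm]
      rw [expand, hSdef]
      refine Finset.sum_le_sum fun j _ => Finset.sum_le_sum fun j' _ => ?_
      calc s j * s j' * ∑ x, D0 x * (dhat (Ds j) D0 x * dhat (Ds j') D0 x)
          ≤ |s j * s j' * ∑ x, D0 x * (dhat (Ds j) D0 x * dhat (Ds j') D0 x)| := le_abs_self _
        _ = |∑ x, D0 x * (dhat (Ds j) D0 x * dhat (Ds j') D0 x)| := by
            rw [abs_mul, abs_mul, hs1, hs1, one_mul, one_mul]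
    have cs := sum_mul_sq_le_sq_mul_sq Finset.univ
      (fun x => Real.sqrt (D0 x) * ψ x) (fun x => Real.sqrt (D0 x) * φ x)
    rw [hg2, mul_one] at cs
    have habs : (∑ j, |a j|) ^ 2 ≤ S := by
      rw [hsum]; exact le_trans cs hf2
    have hroot : ∑ j, |a j| ≤ Real.sqrt S :=
      (Real.le_sqrt (Finset.sum_nonneg fun j _ => abs_nonneg _) hS).mpr habs
    calc N⁻¹ * ∑ j, |expec (Ds j) φ - expec D0 φ| = N⁻¹ * ∑ j, |a j| := by
          simp only [hdiff]
      _ ≤ N⁻¹ * Real.sqrt S := by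
          exact mul_le_mul_of_nonneg_left hroot (by positivity)
      _ = Real.sqrt ((N ^ 2)⁻¹ * S) := by
          rw [Real.sqrt_mul (by positivity), Real.sqrt_inv, Real.sqrt_sq hN.le]
  have hne : Nonempty {φ : X → ℝ // ∑ x, D0 x * φ x ^ 2 = 1} :=
    ⟨⟨fun _ => 1, by simpa using hD0.2⟩⟩
  have hbdd : BddAbove (Set.range fun φ : {φ : X → ℝ // ∑ x, D0 x * φ x ^ 2 = 1} =>
      N⁻¹ * ∑ j, |expec (Ds j) φ.1 - expec D0 φ.1|) := by
    refine ⟨Real.sqrt ((N ^ 2)⁻¹ * S), ?_⟩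
    rintro y ⟨φ, rfl⟩
    exact key φ
  have hub : (⨆ φ : {φ : X → ℝ // ∑ x, D0 x * φ x ^ 2 = 1},
      N⁻¹ * ∑ j, |expec (Ds j) φ.1 - expec D0 φ.1|) ≤ Real.sqrt ((N ^ 2)⁻¹ * S) :=
    ciSup_le key
  have hlb : 0 ≤ ⨆ φ : {φ : X → ℝ // ∑ x, D0 x * φ x ^ 2 = 1},
      N⁻¹ * ∑ j, |expec (Ds j) φ.1 - expec D0 φ.1| := by
    refine le_ciSup_of_le hbdd hne.some ?_
    positivity
  calc (⨆ φ : {φ : X → ℝ // ∑ x, D0 x * φ x ^ 2 = 1},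
        N⁻¹ * ∑ j, |expec (Ds j) φ.1 - expec D0 φ.1|) ^ 2
      ≤ Real.sqrt ((N ^ 2)⁻¹ * S) ^ 2 := pow_le_pow_left₀ hlb hub 2
    _ = (N ^ 2)⁻¹ * S := Real.sq_sqrt hC
end

section
/- Let X = GF(p)² × {-1,1} for a prime p, let D₀ be the uniform distribution on X, and for a ∈ GF(p)² let ℓ_a(z) = 1 iff a₁z₁ + a₂ = z₂ mod p. Let D_a be the distribution on X supported on examples (z, ℓ_a(z)) where z has density 1/(2p²) on each of the p² - p points with ℓ_a = -1 and density 1/(2p) + 1/(2p²) on each of the p points with ℓ_a = 1. Define D̂_a(z,b) = D_a(z,b)/D₀(z,b) - 1. Then for all a, a' ∈ GF(p)²: |E_{(z,b)∼D₀}[D̂_a(z,b)·D̂_{a'}(z,b)]| ≤ p/2 + 1 if a = a'; ≤ 1 if a₁ = a'₁ and a₂ ≠ a'₂; and ≤ 1/p² otherwise. -/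
open Finset

/-- The planted-line distribution `D_a` on `GF(p)² × {±1}` (labels encoded by
`Bool`, `true = 1`, `false = -1`): it is supported on correctly labeled
examples `(z, ℓ_a(z))`, where `ℓ_a(z) = 1` iff `a₁z₁ + a₂ = z₂`; the marginal
density of a positive point is `1/(2p) + 1/(2p²)` and of a negative point is
`1/(2p²)`. -/
noncomputable def lineD (p : ℕ) (a : ZMod p × ZMod p) :
    (ZMod p × ZMod p) × Bool → ℝ := fun x =>
  if a.1 * x.1.1 + a.2 = x.1.2 then
    (if x.2 = true then 1 / (2 * p) + 1 / (2 * p ^ 2) else 0)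
  else
    (if x.2 = true then 0 else 1 / (2 * p ^ 2))

/-- The uniform distribution on `GF(p)² × {±1}`. -/
noncomputable def lineD0 (p : ℕ) : (ZMod p × ZMod p) × Bool → ℝ :=
  fun _ => 1 / (2 * p ^ 2)

/-- `D̂_a = D_a / D₀ - 1`. -/
noncomputable def lineDhat (p : ℕ) (a : ZMod p × ZMod p)
    (x : (ZMod p × ZMod p) × Bool) : ℝ :=
  lineD p a x / lineD0 p x - 1

lemma dhat_eq (p : ℕ) [Fact (Nat.Prime p)] (a : ZMod p × ZMod p)
    (z1 z2 : ZMod p) (b : Bool) :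
    lineDhat p a ((z1, z2), b) =
      if a.1 * z1 + a.2 = z2 then (if b then (p : ℝ) else -1)
      else (if b then -1 else 0) := by
  have hp : (p : ℝ) ≠ 0 := Nat.cast_ne_zero.mpr (Fact.out (p := p.Prime)).pos.ne'
  unfold lineDhat lineD lineD0
  cases b <;> split_ifs <;> simp_all <;> field_simp <;> ring

lemma line_sum (p : ℕ) [Fact (Nat.Prime p)] (a a' : ZMod p × ZMod p) :
    ∑ x, lineD0 p x * (lineDhat p a x * lineDhat p a' x)
      = (1 / (2 * (p : ℝ) ^ 2)) *
        ((((p : ℝ) + 1) ^ 2 + 1) *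
          ((univ.filter (fun z1 : ZMod p => a.1 * z1 + a.2 = a'.1 * z1 + a'.2)).card : ℝ)
          - (p : ℝ) * ((p : ℝ) + 2)) := by
  have hp : (p : ℝ) ≠ 0 := Nat.cast_ne_zero.mpr (Fact.out (p := p.Prime)).pos.ne'
  have hcard : (Fintype.card (ZMod p) : ℝ) = (p : ℝ) := by
    rw [ZMod.card]
  rw [Fintype.sum_prod_type, Fintype.sum_prod_type]
  have per : ∀ z1 z2 : ZMod p,
      (∑ b : Bool, lineD0 p ((z1, z2), b) *
        (lineDhat p a ((z1, z2), b) * lineDhat p a' ((z1, z2), b)))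
      = (1 / (2 * (p : ℝ) ^ 2)) *
        ((((p : ℝ) + 1) ^ 2 + 1) *
            ((if a.1 * z1 + a.2 = z2 then (1:ℝ) else 0) *
             (if a'.1 * z1 + a'.2 = z2 then (1:ℝ) else 0))
          - ((p : ℝ) + 1) *
            ((if a.1 * z1 + a.2 = z2 then (1:ℝ) else 0) +
             (if a'.1 * z1 + a'.2 = z2 then (1:ℝ) else 0))
          + 1) := by
    intro z1 z2
    rw [Fintype.sum_bool]
    rw [dhat_eq, dhat_eq, dhat_eq, dhat_eq]
    unfold lineD0
    simp only [if_true, Bool.false_eq_true, if_false]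
    split_ifs <;> ring
  have inner : ∀ z1 : ZMod p,
      (∑ z2 : ZMod p, ∑ b : Bool, lineD0 p ((z1, z2), b) *
        (lineDhat p a ((z1, z2), b) * lineDhat p a' ((z1, z2), b)))
      = (1 / (2 * (p : ℝ) ^ 2)) *
        ((((p : ℝ) + 1) ^ 2 + 1) *
            (if a.1 * z1 + a.2 = a'.1 * z1 + a'.2 then (1:ℝ) else 0)
          - ((p : ℝ) + 1) * 2 + (p : ℝ)) := by
    intro z1
    simp only [per]
    rw [← Finset.mul_sum]
    congr 1
    have e1 : ∑ z2 : ZMod p,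
        ((if a.1 * z1 + a.2 = z2 then (1:ℝ) else 0) *
         (if a'.1 * z1 + a'.2 = z2 then (1:ℝ) else 0))
        = (if a.1 * z1 + a.2 = a'.1 * z1 + a'.2 then (1:ℝ) else 0) := by
      have : ∀ z2 : ZMod p,
          ((if a.1 * z1 + a.2 = z2 then (1:ℝ) else 0) *
           (if a'.1 * z1 + a'.2 = z2 then (1:ℝ) else 0))
          = (if a.1 * z1 + a.2 = z2 then (if a'.1 * z1 + a'.2 = z2 then (1:ℝ) else 0) else 0) := by
        intro z2; split_ifs <;> simp
      simp only [this]
      rw [Finset.sum_ite_eq]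
      simp [eq_comm]
    have e2 : ∑ z2 : ZMod p, (if a.1 * z1 + a.2 = z2 then (1:ℝ) else 0) = 1 := by
      rw [Finset.sum_ite_eq]; simp
    have e3 : ∑ z2 : ZMod p, (if a'.1 * z1 + a'.2 = z2 then (1:ℝ) else 0) = 1 := by
      rw [Finset.sum_ite_eq]; simp
    have e4 : ∑ _z2 : ZMod p, (1 : ℝ) = (p : ℝ) := by
      simp [Finset.card_univ, ZMod.card]
    rw [Finset.sum_add_distrib, Finset.sum_sub_distrib, ← Finset.mul_sum, ← Finset.mul_sum,
      Finset.sum_add_distrib, e1, e2, e3, e4]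
    ring
  simp only [inner]
  rw [← Finset.mul_sum]
  congr 1
  rw [Finset.sum_add_distrib, Finset.sum_sub_distrib, ← Finset.mul_sum]
  rw [Finset.sum_boole]
  have e5 : ∑ _z1 : ZMod p, (((p : ℝ) + 1) * 2) = (p : ℝ) * (((p : ℝ) + 1) * 2) := by
    simp [Finset.sum_const, Finset.card_univ, ZMod.card]
  have e6 : ∑ _z1 : ZMod p, (p : ℝ) = (p : ℝ) * (p : ℝ) := by
    simp [Finset.sum_const, Finset.card_univ, ZMod.card]
  rw [e5, e6]
  rw [Finset.filter_congr_decidable]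
  ring

/-- Pairwise correlation bounds for the planted-line distributions: identical
lines, parallel distinct lines, and non-parallel lines. -/
theorem stmt14 (p : ℕ) [Fact (Nat.Prime p)] (a a' : ZMod p × ZMod p) :
    (a = a' →
      |∑ x, lineD0 p x * (lineDhat p a x * lineDhat p a' x)| ≤ (p : ℝ) / 2 + 1) ∧
    (a.1 = a'.1 → a.2 ≠ a'.2 →
      |∑ x, lineD0 p x * (lineDhat p a x * lineDhat p a' x)| ≤ 1) ∧
    (a.1 ≠ a'.1 →
      |∑ x, lineD0 p x * (lineDhat p a x * lineDhat p a' x)| ≤ 1 / (p : ℝ) ^ 2) := by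
  have hp2 : (2 : ℝ) ≤ (p : ℝ) := by
    exact_mod_cast (Fact.out (p := p.Prime)).two_le
  have hp : (0 : ℝ) < (p : ℝ) := by linarith
  rw [line_sum]
  refine ⟨?_, ?_, ?_⟩
  · rintro rfl
    have hc : (univ.filter (fun z1 : ZMod p => a.1 * z1 + a.2 = a.1 * z1 + a.2)).card
        = Fintype.card (ZMod p) := by
      simp [Finset.filter_true_of_mem]
    rw [hc, ZMod.card]
    have : (1 / (2 * (p : ℝ) ^ 2)) *
        ((((p : ℝ) + 1) ^ 2 + 1) * (p : ℝ) - (p : ℝ) * ((p : ℝ) + 2))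
        = (p : ℝ) / 2 + 1 / 2 := by
      field_simp; ring
    rw [this, abs_of_nonneg (by linarith)]
    linarith
  · intro h1 h2
    have hc : (univ.filter (fun z1 : ZMod p => a.1 * z1 + a.2 = a'.1 * z1 + a'.2)).card = 0 := by
      rw [Finset.card_eq_zero]
      ext z1
      simp only [Finset.mem_filter, Finset.mem_univ, true_and, Finset.notMem_empty, iff_false]
      rw [h1]
      intro h
      exact h2 (by linear_combination h)
    rw [hc]
    have : (1 / (2 * (p : ℝ) ^ 2)) *
        ((((p : ℝ) + 1) ^ 2 + 1) * ((0 : ℕ) : ℝ) - (p : ℝ) * ((p : ℝ) + 2))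
        = -(((p : ℝ) + 2) / (2 * (p : ℝ))) := by
      field_simp; ring
    rw [this, abs_neg, abs_of_nonneg (by positivity)]
    rw [div_le_one (by linarith)]
    linarith
  · intro h
    have hd : a.1 - a'.1 ≠ 0 := sub_ne_zero.mpr h
    have key : ∀ z1 : ZMod p,
        (a.1 * z1 + a.2 = a'.1 * z1 + a'.2) ↔ z1 = (a.1 - a'.1)⁻¹ * (a'.2 - a.2) := by
      intro z1
      rw [inv_mul_eq_div, eq_div_iff hd]
      constructor
      · intro h'; linear_combination h'
      · intro h'; linear_combination h'
    have hc : (univ.filter (fun z1 : ZMod p => a.1 * z1 + a.2 = a'.1 * z1 + a'.2)).card = 1 := by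
      have : (univ.filter (fun z1 : ZMod p => a.1 * z1 + a.2 = a'.1 * z1 + a'.2))
          = {(a.1 - a'.1)⁻¹ * (a'.2 - a.2)} := by
        ext z1
        simp [key]
      rw [this, Finset.card_singleton]
    rw [hc]
    have : (1 / (2 * (p : ℝ) ^ 2)) *
        ((((p : ℝ) + 1) ^ 2 + 1) * ((1 : ℕ) : ℝ) - (p : ℝ) * ((p : ℝ) + 2))
        = 1 / (p : ℝ) ^ 2 := by
      field_simp; ring
    rw [this, abs_of_nonneg (by positivity)]
end
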